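/- arXiv:1804.09508 — 2 statements merged into one kernel-verified Lean document; each statement's English description precedes it below -/
import Mathlib

section
/- Let C be the binary code of length 2^t generated by the matrix M = (G^{⊗(t−p)})_0 ⊗ G^{⊗p}, where (G^{⊗(t−p)})_0 denotes G^{⊗(t−p)} with its first row removed. Then every codeword x of C satisfies the 2^p parity checks ⊕_{i : i mod 2^p = j} x_i = 0 for each j = 0,…,2^p − 1, and these 2^p parity checks are linearly independent. -/
open Matrix

/-- The polar kernel `G = [[1,0],[1,1]]` over `GF(2)`. -/
def G2 : Matrix (Fin 2) (Fin 2) (ZMod 2) := !![1, 0; 1, 1]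

/-- Bit `k` of the natural number `i`, as an element of `Fin 2`. -/
def bitf (i k : ℕ) : Fin 2 := ⟨(Nat.testBit i k).toNat, Bool.toNat_lt _⟩

/-- The `n`-fold Kronecker power of `G2`: with the standard Kronecker index
ordering, entry `(i, j)` is the product over the `n` bit positions of the
corresponding entries of `G2`. -/
def Gpow (n : ℕ) : Matrix (Fin (2 ^ n)) (Fin (2 ^ n)) (ZMod 2) :=
  fun i j => ∏ k ∈ Finset.range n, G2 (bitf (i : ℕ) k) (bitf (j : ℕ) k)

lemma idx_lt {t p : ℕ} (h : p ≤ t) (i : Fin (2 ^ (t - p))) (j : Fin (2 ^ p)) :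
    (i : ℕ) * 2 ^ p + (j : ℕ) < 2 ^ t := by
  have hi := i.isLt
  have hj := j.isLt
  calc (i : ℕ) * 2 ^ p + (j : ℕ) < (i : ℕ) * 2 ^ p + 2 ^ p := by omega
    _ = ((i : ℕ) + 1) * 2 ^ p := by ring
    _ ≤ 2 ^ (t - p) * 2 ^ p := Nat.mul_le_mul_right _ (by omega)
    _ = 2 ^ t := by rw [← pow_add, Nat.sub_add_cancel h]

/-- The generator matrix `M = (G^{⊗(t-p)})₀ ⊗ G^{⊗p}` of a G-PC node:
`(G^{⊗(t-p)})₀` is `G^{⊗(t-p)}` with its first row removed, and `⊗` is the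
Kronecker product (columns indexed by `Fin (2^t)` via `c ↦ (c / 2^p, c % 2^p)`). -/
def Mgpc (t p : ℕ) (h : p ≤ t) :
    Matrix (Fin (2 ^ (t - p) - 1) × Fin (2 ^ p)) (Fin (2 ^ t)) (ZMod 2) :=
  fun r c =>
    Gpow (t - p) ⟨(r.1 : ℕ) + 1, by have := r.1.isLt; omega⟩
        ⟨(c : ℕ) / 2 ^ p, by
          rw [Nat.div_lt_iff_lt_mul (by positivity), ← pow_add, Nat.sub_add_cancel h]
          exact c.isLt⟩ *
      Gpow p r.2 ⟨(c : ℕ) % 2 ^ p, Nat.mod_lt _ (by positivity)⟩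


lemma bitf_val (i k : ℕ) : ((bitf i k : Fin 2) : ℕ) = i / 2 ^ k % 2 := by
  have := Nat.mod_two_eq_zero_or_one (i / 2 ^ k)
  simp only [bitf, Nat.testBit_eq_decide_div_mod_eq]
  rcases this with h | h <;> simp [h]

lemma bitf_equiv {n : ℕ} (f : Fin n → Fin 2) (k : Fin n) :
    bitf ((finFunctionFinEquiv f : Fin (2 ^ n)) : ℕ) (k : ℕ) = f k := by
  have := congrFun (finFunctionFinEquiv.symm_apply_apply f) k
  exact Fin.ext (by rw [bitf_val]; exact congrArg Fin.val this)

lemma rowsum_Gpow (n : ℕ) (i : Fin (2 ^ n)) (hi : (i : ℕ) ≠ 0) :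
    ∑ j : Fin (2 ^ n), Gpow n i j = 0 := by
  have hcomp : ∑ j : Fin (2 ^ n), Gpow n i j
      = ∑ f : Fin n → Fin 2, ∏ k : Fin n, G2 (bitf (i : ℕ) k) (f k) := by
    rw [← (finFunctionFinEquiv (m := 2) (n := n)).sum_comp (fun j => Gpow n i j)]
    refine Finset.sum_congr rfl fun f _ => ?_
    rw [Gpow, ← Fin.prod_univ_eq_prod_range]
    exact Finset.prod_congr rfl fun k _ => by rw [bitf_equiv]
  rw [hcomp, ← Fintype.piFinset_univ, ← Finset.prod_univ_sum]
  obtain ⟨k, hk, hb⟩ : ∃ k, k < n ∧ Nat.testBit (i : ℕ) k = true := by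
    by_contra hc
    push_neg at hc
    exact hi (Nat.eq_of_testBit_eq fun k => by
      rcases lt_or_ge k n with hkn | hkn
      · simpa using (hc k hkn)
      · simp [Nat.testBit_eq_false_of_lt
          (lt_of_lt_of_le i.isLt (Nat.pow_le_pow_right (by norm_num) hkn))])
  apply Finset.prod_eq_zero (Finset.mem_univ (⟨k, hk⟩ : Fin n))
  have : bitf (i : ℕ) k = 1 := Fin.ext (by
    rw [bitf_val]; simp [Nat.testBit_eq_decide_div_mod_eq] at hb; omega)
  rw [this]
  decide

/-- Every codeword of the G-PC code (row space of `M`) satisfies the `2^p`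
parity checks `⊕_{i ≡ j (mod 2^p)} x_i = 0`, and these checks are linearly
independent. -/
theorem gpc_parity_checks (t p : ℕ) (h : p < t) :
    (∀ x ∈ Set.range (fun u : Fin (2 ^ (t - p) - 1) × Fin (2 ^ p) → ZMod 2 =>
        Matrix.vecMul u (Mgpc t p h.le)),
      ∀ j : Fin (2 ^ p),
        ∑ i : Fin (2 ^ (t - p)), x ⟨(i : ℕ) * 2 ^ p + (j : ℕ), idx_lt h.le i j⟩ = 0) ∧
    LinearIndependent (ZMod 2) (fun j : Fin (2 ^ p) =>
      (fun c : Fin (2 ^ t) => if (c : ℕ) % 2 ^ p = (j : ℕ) then (1 : ZMod 2) else 0)) := by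
  constructor
  · rintro x ⟨u, rfl⟩ j
    simp only [Matrix.vecMul, dotProduct]
    rw [Finset.sum_comm]
    refine Finset.sum_eq_zero fun r _ => ?_
    rw [← Finset.mul_sum]
    have hz : ∑ i : Fin (2 ^ (t - p)),
        Mgpc t p h.le r ⟨(i : ℕ) * 2 ^ p + (j : ℕ), idx_lt h.le i j⟩ = 0 := by
      have hrw : ∀ i : Fin (2 ^ (t - p)),
          Mgpc t p h.le r ⟨(i : ℕ) * 2 ^ p + (j : ℕ), idx_lt h.le i j⟩
          = Gpow (t - p) ⟨(r.1 : ℕ) + 1, by have := r.1.isLt; omega⟩ i * Gpow p r.2 j := by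
        intro i
        have hd : ((i : ℕ) * 2 ^ p + (j : ℕ)) / 2 ^ p = (i : ℕ) := by
          rw [mul_comm, Nat.mul_add_div (pow_pos two_pos p), Nat.div_eq_of_lt j.isLt, add_zero]
        have hm : ((i : ℕ) * 2 ^ p + (j : ℕ)) % 2 ^ p = (j : ℕ) := by
          rw [mul_comm, Nat.mul_add_mod, Nat.mod_eq_of_lt j.isLt]
        unfold Mgpc
        congr 1
        · congr 1; exact Fin.ext hd
        · congr 1; exact Fin.ext hm
      calc ∑ i : Fin (2 ^ (t - p)),
            Mgpc t p h.le r ⟨(i : ℕ) * 2 ^ p + (j : ℕ), idx_lt h.le i j⟩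
          = ∑ i : Fin (2 ^ (t - p)),
            Gpow (t - p) ⟨(r.1 : ℕ) + 1, by have := r.1.isLt; omega⟩ i * Gpow p r.2 j :=
            Finset.sum_congr rfl fun i _ => hrw i
        _ = (∑ i : Fin (2 ^ (t - p)),
            Gpow (t - p) ⟨(r.1 : ℕ) + 1, by have := r.1.isLt; omega⟩ i) * Gpow p r.2 j := by
            rw [Finset.sum_mul]
        _ = 0 := by rw [rowsum_Gpow _ _ (by simp), zero_mul]
    rw [hz, mul_zero]
  · rw [Fintype.linearIndependent_iff]
    intro g hg j
    have hjt : (j : ℕ) < 2 ^ t :=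
      lt_of_lt_of_le j.isLt (Nat.pow_le_pow_right (by norm_num) h.le)
    have := congrFun hg ⟨(j : ℕ), hjt⟩
    simp only [Finset.sum_apply, Pi.smul_apply, smul_eq_mul, Pi.zero_apply] at this
    rw [← this]
    rw [Finset.sum_eq_single j]
    · simp [Nat.mod_eq_of_lt j.isLt]
    · intro b _ hb
      have : ((j : ℕ)) % 2 ^ p ≠ (b : ℕ) := by
        rw [Nat.mod_eq_of_lt j.isLt]
        exact fun e => hb (Fin.ext e.symm)
      simp [this]
    · intro habs; exact absurd (Finset.mem_univ j) habs
end

section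
/- A binary vector x of length 2^t lies in the G-PC code generated by (G^{⊗(t−p)})_0 ⊗ G^{⊗p} if and only if for each residue j modulo 2^p the subvector (x_i)_{i ≡ j mod 2^p} has even weight; i.e., the code is the direct interleaving of 2^p single parity-check codes of length 2^{t−p}. -/
open Matrix

-- basic bit facts
lemma bitf_of_lt {k b : ℕ} (hk : k < 2 ^ b) : bitf k b = 0 := by
  simp [bitf, Nat.testBit_eq_false_of_lt hk]

lemma bitf_zero (b : ℕ) : bitf 0 b = 0 := by simp [bitf]

lemma bitf_two_pow_add_lt {n k b : ℕ} (hb : b < n) : bitf (2 ^ n + k) b = bitf k b := by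
  unfold bitf
  congr 1
  rw [Nat.testBit_eq_decide_div_mod_eq, Nat.testBit_eq_decide_div_mod_eq]
  have h1 : 2 ^ n + k = 2 ^ b * 2 ^ (n - b) + k := by
    rw [← pow_add, Nat.add_sub_cancel' hb.le]
  rw [h1, Nat.mul_add_div (by positivity : 0 < 2 ^ b)]
  have h2 : 2 ^ (n - b) = 2 * 2 ^ (n - b - 1) := by
    rw [← pow_succ']; congr 1; omega
  rw [h2, Nat.mul_add_mod]

lemma bitf_two_pow_add_self {n k : ℕ} (hk : k < 2 ^ n) : bitf (2 ^ n + k) n = 1 := by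
  unfold bitf
  have : (2 ^ n + k) / 2 ^ n = 1 := by
    rw [Nat.add_div_left _ (by positivity : 0 < 2 ^ n), Nat.div_eq_of_lt hk]
  rw [Fin.ext_iff]
  simp [Nat.testBit_eq_decide_div_mod_eq, this]

lemma sum_prod_bits (n : ℕ) (f : ℕ → Fin 2 → ZMod 2) :
    ∑ k ∈ Finset.range (2 ^ n), ∏ b ∈ Finset.range n, f b (bitf k b)
      = ∏ b ∈ Finset.range n, (f b 0 + f b 1) := by
  induction n with
  | zero => simp
  | succ n ih =>
    have h2 : 2 ^ (n + 1) = 2 ^ n + 2 ^ n := by ring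
    rw [h2, Finset.sum_range_add]
    have e1 : ∀ k ∈ Finset.range (2 ^ n),
        ∏ b ∈ Finset.range (n + 1), f b (bitf k b)
          = (∏ b ∈ Finset.range n, f b (bitf k b)) * f n 0 := by
      intro k hk
      rw [Finset.prod_range_succ, bitf_of_lt (Finset.mem_range.mp hk)]
    have e2 : ∀ k ∈ Finset.range (2 ^ n),
        ∏ b ∈ Finset.range (n + 1), f b (bitf (2 ^ n + k) b)
          = (∏ b ∈ Finset.range n, f b (bitf k b)) * f n 1 := by
      intro k hk
      rw [Finset.prod_range_succ, bitf_two_pow_add_self (Finset.mem_range.mp hk)]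
      congr 1
      exact Finset.prod_congr rfl fun b hb => by
        rw [bitf_two_pow_add_lt (Finset.mem_range.mp hb)]
    rw [Finset.sum_congr rfl e1, Finset.sum_congr rfl e2, ← Finset.sum_mul,
      ← Finset.sum_mul, ih, Finset.prod_range_succ]
    ring

lemma G2_col0 : ∀ a : Fin 2, G2 a 0 = 1 := by decide
lemma G2_rowsum : ∀ a : Fin 2, G2 a 0 + G2 a 1 = if a = 0 then 1 else 0 := by decide
lemma G2_orth : ∀ a c : Fin 2,
    G2 a 0 * G2 0 c + G2 a 1 * G2 1 c = if a = c then 1 else 0 := by decide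

lemma nat_bits_eq {n a b : ℕ} (ha : a < 2 ^ n) (hb : b < 2 ^ n)
    (h : ∀ k ∈ Finset.range n, bitf a k = bitf b k) : a = b := by
  apply Nat.eq_of_testBit_eq
  intro k
  rcases lt_or_ge k n with hk | hk
  · have := h k (Finset.mem_range.mpr hk)
    have := congrArg Fin.val this
    simp only [bitf] at this
    rcases ht : Nat.testBit a k <;> rcases hu : Nat.testBit b k <;> simp_all
  · have h1 : a < 2 ^ k := lt_of_lt_of_le ha (Nat.pow_le_pow_right (by norm_num) hk)
    have h2 : b < 2 ^ k := lt_of_lt_of_le hb (Nat.pow_le_pow_right (by norm_num) hk)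
    rw [Nat.testBit_eq_false_of_lt h1, Nat.testBit_eq_false_of_lt h2]

lemma gpow_col0 (n : ℕ) (i : Fin (2 ^ n)) (c : Fin (2 ^ n)) (hc : (c : ℕ) = 0) :
    Gpow n i c = 1 := by
  unfold Gpow
  rw [hc]
  exact Finset.prod_eq_one fun b _ => by rw [bitf_zero, G2_col0]

lemma gpow_row_sum (n : ℕ) (s : Fin (2 ^ n)) (hs : (s : ℕ) ≠ 0) :
    ∑ k : Fin (2 ^ n), Gpow n s k = 0 := by
  set f : ℕ → Fin 2 → ZMod 2 := fun b m => G2 (bitf (s : ℕ) b) m with hf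
  have h1 : ∑ k : Fin (2 ^ n), Gpow n s k
      = ∑ k ∈ Finset.range (2 ^ n), ∏ b ∈ Finset.range n, f b (bitf k b) :=
    Fin.sum_univ_eq_sum_range (fun k => ∏ b ∈ Finset.range n, f b (bitf k b)) _
  rw [h1, sum_prod_bits n f]
  obtain ⟨b, hb, hne⟩ : ∃ b ∈ Finset.range n, bitf (s : ℕ) b ≠ bitf 0 b := by
    by_contra hall
    push_neg at hall
    exact hs (nat_bits_eq s.isLt (by positivity : 0 < 2 ^ n) hall)
  refine Finset.prod_eq_zero hb ?_
  rw [hf]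
  simp only []
  rw [G2_rowsum, if_neg (by rw [bitf_zero] at hne; exact hne)]

lemma gpow_invol (n : ℕ) : Gpow n * Gpow n = 1 := by
  ext i j
  rw [Matrix.mul_apply, Matrix.one_apply]
  set f : ℕ → Fin 2 → ZMod 2 := fun b m => G2 (bitf (i : ℕ) b) m * G2 m (bitf (j : ℕ) b) with hf
  have e : ∀ k : Fin (2 ^ n), Gpow n i k * Gpow n k j
      = ∏ b ∈ Finset.range n, f b (bitf (k : ℕ) b) := by
    intro k
    rw [hf]
    unfold Gpow
    rw [← Finset.prod_mul_distrib]
  rw [Finset.sum_congr rfl fun k _ => e k]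
  rw [Fin.sum_univ_eq_sum_range (fun k => ∏ b ∈ Finset.range n, f b (bitf k b)) (2 ^ n)]
  rw [sum_prod_bits n f]
  by_cases hij : i = j
  · rw [if_pos hij]
    refine Finset.prod_eq_one fun b _ => ?_
    rw [hf]
    simp only []
    rw [G2_orth, hij, if_pos rfl]
  · rw [if_neg hij]
    obtain ⟨b, hb, hne⟩ : ∃ b ∈ Finset.range n, bitf (i : ℕ) b ≠ bitf (j : ℕ) b := by
      by_contra hall
      push_neg at hall
      exact hij (Fin.ext (nat_bits_eq i.isLt j.isLt hall))
    exact Finset.prod_eq_zero hb (by rw [hf]; simp only []; rw [G2_orth, if_neg hne])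

lemma even_filter_iff {n : ℕ} (y : Fin n → ZMod 2) :
    Even ((Finset.univ.filter fun i => y i = 1).card) ↔ ∑ i, y i = 0 := by
  have hsum : ∑ i, y i = (((Finset.univ.filter fun i => y i = 1).card : ℕ) : ZMod 2) := by
    rw [Finset.card_eq_sum_ones, Nat.cast_sum, Finset.sum_filter]
    refine Finset.sum_congr rfl fun i _ => ?_
    by_cases hy : y i = 1
    · simp [hy]
    · have h0 : y i = 0 := by
        generalize y i = a at hy ⊢
        revert hy
        revert a
        decide
      simp [hy, h0]
  rw [hsum, ZMod.natCast_eq_zero_iff]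
  exact even_iff_two_dvd

lemma sum_fin_pred {N : ℕ} (hN : 0 < N) (g : Fin N → ZMod 2) :
    ∑ s, g s = g ⟨0, hN⟩ + ∑ r : Fin (N - 1), g ⟨(r : ℕ) + 1, by omega⟩ := by
  obtain ⟨M, rfl⟩ : ∃ M, N = M + 1 := ⟨N - 1, by omega⟩
  rw [Fin.sum_univ_succ]
  rfl

lemma div_idx {p m : ℕ} (i : Fin m) (j : Fin (2 ^ p)) :
    ((i : ℕ) * 2 ^ p + (j : ℕ)) / 2 ^ p = (i : ℕ) := by
  rw [add_comm, Nat.add_mul_div_right _ _ (by positivity : 0 < 2 ^ p),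
    Nat.div_eq_of_lt j.isLt, zero_add]

lemma mod_idx {p m : ℕ} (i : Fin m) (j : Fin (2 ^ p)) :
    ((i : ℕ) * 2 ^ p + (j : ℕ)) % 2 ^ p = (j : ℕ) := by
  rw [add_comm, Nat.add_mul_mod_self_right, Nat.mod_eq_of_lt j.isLt]

lemma gpow_congr {n : ℕ} {a a' b b' : Fin (2 ^ n)} (ha : (a : ℕ) = (a' : ℕ))
    (hb : (b : ℕ) = (b' : ℕ)) : Gpow n a b = Gpow n a' b' := by
  rw [show a = a' from Fin.ext ha, show b = b' from Fin.ext hb]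

/-- A binary vector of length `2^t` lies in the G-PC code generated by
`(G^{⊗(t-p)})₀ ⊗ G^{⊗p}` iff each of its `2^p` de-interleaved subvectors
(residue classes mod `2^p`) has even weight. -/
theorem gpc_membership (t p : ℕ) (h : p < t) (x : Fin (2 ^ t) → ZMod 2) :
    x ∈ Set.range (fun u : Fin (2 ^ (t - p) - 1) × Fin (2 ^ p) → ZMod 2 =>
        Matrix.vecMul u (Mgpc t p h.le)) ↔
      ∀ j : Fin (2 ^ p),
        Even ((Finset.univ.filter fun i : Fin (2 ^ (t - p)) =>
          x ⟨(i : ℕ) * 2 ^ p + (j : ℕ), idx_lt h.le i j⟩ = 1).card) := by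
  have hNpos : 0 < 2 ^ (t - p) := by positivity
  constructor
  · rintro ⟨u, rfl⟩ j
    dsimp only
    rw [even_filter_iff (fun i : Fin (2 ^ (t - p)) =>
      Matrix.vecMul u (Mgpc t p h.le) ⟨(i : ℕ) * 2 ^ p + (j : ℕ), idx_lt h.le i j⟩)]
    have expand : ∀ i : Fin (2 ^ (t - p)),
        Matrix.vecMul u (Mgpc t p h.le) ⟨(i : ℕ) * 2 ^ p + (j : ℕ), idx_lt h.le i j⟩
          = ∑ r : Fin (2 ^ (t - p) - 1) × Fin (2 ^ p),
              u r * (Gpow (t - p) ⟨(r.1 : ℕ) + 1, by have := r.1.isLt; omega⟩ i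
                * Gpow p r.2 j) := by
      intro i
      show (∑ r, u r * Mgpc t p h.le r ⟨(i : ℕ) * 2 ^ p + (j : ℕ), idx_lt h.le i j⟩) = _
      refine Finset.sum_congr rfl fun r _ => ?_
      congr 1
      unfold Mgpc
      exact congrArg₂ (· * ·) (gpow_congr rfl (div_idx i j)) (gpow_congr rfl (mod_idx i j))
    rw [Finset.sum_congr rfl fun i _ => expand i, Finset.sum_comm]
    refine Finset.sum_eq_zero fun r _ => ?_
    have e1 : ∀ i : Fin (2 ^ (t - p)),
        u r * (Gpow (t - p) ⟨(r.1 : ℕ) + 1, by have := r.1.isLt; omega⟩ i * Gpow p r.2 j)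
          = (u r * Gpow p r.2 j) * Gpow (t - p) ⟨(r.1 : ℕ) + 1, by have := r.1.isLt; omega⟩ i :=
      fun i => by ring
    rw [Finset.sum_congr rfl fun i _ => e1 i, ← Finset.mul_sum,
      gpow_row_sum _ _ (Nat.succ_ne_zero _), mul_zero]
  · intro hev
    have hsum : ∀ j : Fin (2 ^ p),
        ∑ i : Fin (2 ^ (t - p)), x ⟨(i : ℕ) * 2 ^ p + (j : ℕ), idx_lt h.le i j⟩ = 0 :=
      fun j => (even_filter_iff _).mp (hev j)
    set A := Gpow (t - p) with hA
    set B := Gpow p with hB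
    have hA2 : A * A = 1 := gpow_invol _
    have hB2 : B * B = 1 := gpow_invol _
    set X : Matrix (Fin (2 ^ (t - p))) (Fin (2 ^ p)) (ZMod 2) :=
      fun i j => x ⟨(i : ℕ) * 2 ^ p + (j : ℕ), idx_lt h.le i j⟩ with hX
    set U : Matrix (Fin (2 ^ (t - p))) (Fin (2 ^ p)) (ZMod 2) := Aᵀ * X * B with hU
    have hXU : Aᵀ * U * B = X := by
      rw [hU]
      calc Aᵀ * (Aᵀ * X * B) * B
          = (Aᵀ * Aᵀ) * X * (B * B) := by simp only [Matrix.mul_assoc]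
        _ = (A * A)ᵀ * X * (B * B) := by rw [Matrix.transpose_mul]
        _ = X := by rw [hA2, hB2, Matrix.transpose_one, Matrix.one_mul, Matrix.mul_one]
    have hU0 : ∀ s2 : Fin (2 ^ p), U ⟨0, hNpos⟩ s2 = 0 := by
      intro s2
      rw [hU, Matrix.mul_apply]
      refine Finset.sum_eq_zero fun j' _ => ?_
      have hAX : (Aᵀ * X) ⟨0, hNpos⟩ j' = 0 := by
        rw [Matrix.mul_apply]
        have e2 : ∀ i' : Fin (2 ^ (t - p)),
            Aᵀ ⟨0, hNpos⟩ i' * X i' j' = X i' j' := by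
          intro i'
          rw [Matrix.transpose_apply,
            show A i' ⟨0, hNpos⟩ = 1 from gpow_col0 _ _ _ rfl, one_mul]
        rw [Finset.sum_congr rfl fun i' _ => e2 i']
        exact hsum j'
      rw [hAX, zero_mul]
    rw [Set.mem_range]
    refine ⟨fun r => U ⟨(r.1 : ℕ) + 1, by have := r.1.isLt; omega⟩ r.2, ?_⟩
    funext c
    have hic : (c : ℕ) / 2 ^ p < 2 ^ (t - p) := by
      rw [Nat.div_lt_iff_lt_mul (by positivity), ← pow_add, Nat.sub_add_cancel h.le]
      exact c.isLt
    have hjc : (c : ℕ) % 2 ^ p < 2 ^ p := Nat.mod_lt _ (by positivity)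
    set ic : Fin (2 ^ (t - p)) := ⟨(c : ℕ) / 2 ^ p, hic⟩ with hicd
    set jc : Fin (2 ^ p) := ⟨(c : ℕ) % 2 ^ p, hjc⟩ with hjcd
    have step1 : Matrix.vecMul
          (fun r : Fin (2 ^ (t - p) - 1) × Fin (2 ^ p) =>
            U ⟨(r.1 : ℕ) + 1, by have := r.1.isLt; omega⟩ r.2)
          (Mgpc t p h.le) c
        = ∑ r1 : Fin (2 ^ (t - p) - 1), ∑ r2 : Fin (2 ^ p),
            U ⟨(r1 : ℕ) + 1, by have := r1.isLt; omega⟩ r2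
              * (A ⟨(r1 : ℕ) + 1, by have := r1.isLt; omega⟩ ic * B r2 jc) := by
      show (∑ r : Fin (2 ^ (t - p) - 1) × Fin (2 ^ p),
          (fun r : Fin (2 ^ (t - p) - 1) × Fin (2 ^ p) =>
            U ⟨(r.1 : ℕ) + 1, by have := r.1.isLt; omega⟩ r.2) r * Mgpc t p h.le r c) = _
      rw [Fintype.sum_prod_type]
      rfl
    have hg0 : (∑ s2 : Fin (2 ^ p), U ⟨0, hNpos⟩ s2 * (A ⟨0, hNpos⟩ ic * B s2 jc)) = 0 :=
      Finset.sum_eq_zero fun s2 _ => by rw [hU0 s2, zero_mul]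
    have step2 : (∑ s1 : Fin (2 ^ (t - p)), ∑ s2 : Fin (2 ^ p),
          U s1 s2 * (A s1 ic * B s2 jc))
        = ∑ r1 : Fin (2 ^ (t - p) - 1), ∑ r2 : Fin (2 ^ p),
            U ⟨(r1 : ℕ) + 1, by have := r1.isLt; omega⟩ r2
              * (A ⟨(r1 : ℕ) + 1, by have := r1.isLt; omega⟩ ic * B r2 jc) := by
      have := sum_fin_pred hNpos
        (fun s1 => ∑ s2 : Fin (2 ^ p), U s1 s2 * (A s1 ic * B s2 jc))
      rw [this, hg0, zero_add]
    have step3 : (∑ s1 : Fin (2 ^ (t - p)), ∑ s2 : Fin (2 ^ p),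
          U s1 s2 * (A s1 ic * B s2 jc)) = (Aᵀ * U * B) ic jc := by
      rw [Matrix.mul_apply]
      have e1 : ∀ s2 : Fin (2 ^ p), (Aᵀ * U) ic s2 * B s2 jc
          = ∑ s1 : Fin (2 ^ (t - p)), A s1 ic * U s1 s2 * B s2 jc := by
        intro s2
        rw [Matrix.mul_apply, Finset.sum_mul]
        rfl
      rw [Finset.sum_congr rfl fun s2 _ => e1 s2, Finset.sum_comm]
      exact Finset.sum_congr rfl fun s1 _ => Finset.sum_congr rfl fun s2 _ => by ring
    have hcc : (⟨(ic : ℕ) * 2 ^ p + (jc : ℕ), idx_lt h.le ic jc⟩ : Fin (2 ^ t)) = c :=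
      Fin.ext (Nat.div_add_mod' _ _)
    rw [step1, ← step2, step3, hXU]
    exact congrArg x hcc
end
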